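/- arXiv:1202.0460 — 2 statements merged into one kernel-verified Lean document; each statement's English description precedes it below -/
import Mathlib

section
/- (Theorem 1, convergence of coalition formation) In a hedonic coalitional game on a finite player set N, there is no infinite sequence Π_0, Π_1, Π_2, … of partitions of N in which each Π_{l+1} results from Π_l by an admissible join operation; consequently, starting from any initial partition Π_init, every sequence of admissible join operations terminates after finitely many steps at a final partition Π_final. -/
open Finset

variable {ι : Type*}

/-- A partition of the finite player set: pairwise disjoint nonempty coalitions covering everyone. -/
def IsPartition [DecidableEq ι] [Fintype ι] (P : Finset (Finset ι)) : Prop :=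
  (∀ S ∈ P, S.Nonempty) ∧
  (∀ S ∈ P, ∀ T ∈ P, S ≠ T → Disjoint S T) ∧
  P.biUnion id = Finset.univ

/-- The value of a coalition: v(S) = ∑_{j ∈ S} φ_j(S). -/
def coalitionValue (φ : Finset ι → ι → ℝ) (S : Finset ι) : ℝ := ∑ j ∈ S, φ S j

/-- Total social welfare of a partition: W(Π) = ∑_{S ∈ Π} v(S). -/
def welfare (φ : Finset ι → ι → ℝ) (P : Finset (Finset ι)) : ℝ :=
  ∑ S ∈ P, coalitionValue φ S

/-- `JoinStep φ P P'` : the partition `P'` results from `P` by an admissible join operation: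
a player `i` moves from its coalition `Sm ∈ P` to a coalition `Sk ∈ P ∪ {∅}`, `Sk ≠ Sm`,
with `v(Sk ∪ {i}) + v(Sm \ {i}) > v(Sk) + v(Sm)`; empty sets are removed from the result. -/
def JoinStep [DecidableEq ι] (φ : Finset ι → ι → ℝ) (P P' : Finset (Finset ι)) : Prop :=
  ∃ (i : ι) (Sm Sk : Finset ι),
    Sm ∈ P ∧ i ∈ Sm ∧ (Sk ∈ P ∨ Sk = ∅) ∧ Sk ≠ Sm ∧
    coalitionValue φ Sk + coalitionValue φ Sm <
      coalitionValue φ (insert i Sk) + coalitionValue φ (Sm.erase i) ∧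
    P' = ((P \ {Sm, Sk}) ∪ {Sm.erase i, insert i Sk}).erase ∅

lemma welfare_lt_of_joinStep [DecidableEq ι] [Fintype ι]
    {φ : Finset ι → ι → ℝ} {P P' : Finset (Finset ι)}
    (hP : IsPartition P) (h : JoinStep φ P P') : welfare φ P < welfare φ P' := by
  obtain ⟨i, Sm, Sk, hSm, hiSm, hSk, hne, hlt, hP'⟩ := h
  obtain ⟨hNE, hdisj, -⟩ := hP
  have hv0 : coalitionValue φ (∅ : Finset ι) = 0 := by simp [coalitionValue]
  have hempP : (∅ : Finset ι) ∉ P := fun hc => by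
    simpa using hNE ∅ hc
  have hiSk : i ∉ Sk := by
    rcases hSk with hSk | rfl
    · exact fun hik => Finset.disjoint_left.1 (hdisj Sk hSk Sm hSm hne) hik hiSm
    · simp
  -- rule out insert i Sk = Sm
  have hins : insert i Sk ≠ Sm := by
    intro hEq
    have hSkEq : Sk = Sm.erase i := by
      rw [← hEq, Finset.erase_insert hiSk]
    rw [hSkEq, Finset.insert_erase hiSm] at hlt
    linarith
  -- insert i Sk ∉ P
  have hinsP : insert i Sk ∉ P := by
    intro hc
    by_cases hEq : insert i Sk = Sm
    · exact hins hEq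
    · exact Finset.disjoint_left.1 (hdisj _ hc Sm hSm hEq) (Finset.mem_insert_self i Sk) hiSm
  -- Sm.erase i ∉ P
  have heraP : Sm.erase i ∉ P := by
    intro hc
    have hneq : Sm.erase i ≠ Sm := fun hEq => (Finset.notMem_erase i Sm) (hEq.symm ▸ hiSm)
    have hd := hdisj _ hc Sm hSm hneq
    obtain ⟨x, hx⟩ := hNE _ hc
    exact Finset.disjoint_left.1 hd hx (Finset.mem_of_mem_erase hx)
  have hera_ne : Sm.erase i ≠ insert i Sk := fun hEq => (Finset.notMem_erase i Sm) (hEq.symm ▸ Finset.mem_insert_self i Sk)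
  set A := P \ {Sm, Sk} with hA
  have hWP : welfare φ P = welfare φ A + coalitionValue φ Sm + coalitionValue φ Sk := by
    rcases hSk with hSkP | rfl
    · have hsub : {Sm, Sk} ⊆ P := by
        intro x hx
        rcases Finset.mem_insert.1 hx with rfl | hx
        · exact hSm
        · exact (Finset.mem_singleton.1 hx) ▸ hSkP
      have := Finset.sum_sdiff (f := coalitionValue φ) hsub
      have hpair : ∑ S ∈ ({Sm, Sk} : Finset (Finset ι)), coalitionValue φ S
          = coalitionValue φ Sm + coalitionValue φ Sk :=
        Finset.sum_pair (Ne.symm hne)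
      unfold welfare
      rw [← this, hpair]; ring
    · have hAe : A = P.erase Sm := by
        ext x
        simp only [hA, Finset.mem_sdiff, Finset.mem_insert, Finset.mem_singleton,
          Finset.mem_erase]
        constructor
        · rintro ⟨hx, hx2⟩; exact ⟨fun hEq => hx2 (Or.inl hEq), hx⟩
        · rintro ⟨hx1, hx2⟩
          refine ⟨hx2, ?_⟩
          rintro (rfl | rfl)
          · exact hx1 rfl
          · exact hempP hx2
      unfold welfare
      rw [hAe, hv0, Finset.sum_erase_add P _ hSm]; ring
  have hAins : insert i Sk ∉ A := fun hc => hinsP (Finset.mem_sdiff.1 hc).1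
  have hAera : Sm.erase i ∉ A := fun hc => heraP (Finset.mem_sdiff.1 hc).1
  have hdisjA : Disjoint A ({Sm.erase i, insert i Sk} : Finset (Finset ι)) := by
    simp only [Finset.disjoint_insert_right, Finset.disjoint_singleton_right]
    exact ⟨hAera, hAins⟩
  have hWP' : welfare φ P' = welfare φ A + coalitionValue φ (Sm.erase i)
      + coalitionValue φ (insert i Sk) := by
    rw [hP']
    unfold welfare
    rw [Finset.sum_erase _ hv0, Finset.sum_union hdisjA,
      Finset.sum_pair hera_ne]
    ring
  rw [hWP, hWP']
  linarith

/-- Theorem 1 (convergence): there is no infinite sequence of partitions in which each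
partition results from the previous one by an admissible join operation; hence every
sequence of admissible join operations terminates after finitely many steps. -/
theorem no_infinite_join_sequence [DecidableEq ι] [Fintype ι]
    (φ : Finset ι → ι → ℝ) :
    ¬ ∃ f : ℕ → Finset (Finset ι),
        (∀ n, IsPartition (f n)) ∧ ∀ n, JoinStep φ (f n) (f (n + 1)) := by
  rintro ⟨f, hpart, hstep⟩
  have hmono : StrictMono (fun n => welfare φ (f n)) :=
    strictMono_nat_of_lt_succ fun n => welfare_lt_of_joinStep (hpart n) (hstep n)
  have hinj : Function.Injective f := fun a b hab =>
    hmono.injective (by simp [hab])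
  exact (Finite.of_injective f hinj).not_infinite (by infer_instance)
end

section
/- (Theorem 1 together with Proposition 2) In a hedonic coalitional game on a finite player set N, for every initial partition Π_init there exists a finite sequence Π_init = Π_0, Π_1, …, Π_T of partitions in which each Π_{l+1} results from Π_l by an admissible join operation, and the final partition Π_T is Nash-stable (no admissible join operation can be performed from Π_T). -/
/-!
Social welfare is an exact potential for admissible joins: a join by player `i` from `Sm` to
`Sk` only replaces the coalitions `Sm, Sk` by `Sm \ {i}, Sk ∪ {i}`, so the welfare changes by
`v(Sk ∪ {i}) + v(Sm \ {i}) - v(Sk) - v(Sm) > 0`. Joins map partitions to partitions, and there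
are finitely many of them, so repeatedly performing admissible joins must stop, and it stops
exactly at a Nash-stable partition.
-/

open Finset

variable {ι : Type*}

theorem exists_chain_to_terminal {α : Type*} {r : α → α → Prop} {p : α → Prop}
    (hwf : WellFounded fun b a => p a ∧ r a b) (hp : ∀ ⦃a b⦄, p a → r a b → p b)
    {a : α} (ha : p a) :
    ∃ (T : ℕ) (f : ℕ → α), f 0 = a ∧ (∀ l < T, r (f l) (f (l + 1))) ∧ ∀ b, ¬ r (f T) b := by
  induction a using hwf.induction with
  | _ a ih =>
    by_cases hterm : ∃ b, r a b
    · obtain ⟨b, hab⟩ := hterm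
      obtain ⟨T, f, hf0, hstep, hlast⟩ := ih b ⟨ha, hab⟩ (hp ha hab)
      refine ⟨T + 1, fun | 0 => a | l + 1 => f l, rfl, ?_, hlast⟩
      rintro (_ | l) hl
      · simpa [hf0] using hab
      · exact hstep l (by omega)
    · exact ⟨0, fun _ => a, rfl, by simp, not_exists.mp hterm⟩

theorem wellFounded_of_increasing_potential {α β : Type*} [Finite α] [Preorder β]
    {r : α → α → Prop} {p : α → Prop} (W : α → β) (hW : ∀ ⦃a b⦄, p a → r a b → W a < W b) :
    WellFounded fun b a => p a ∧ r a b := by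
  have : IsTrans α (fun b a => W a < W b) := ⟨fun _ _ _ h₁ h₂ => h₂.trans h₁⟩
  have : Std.Irrefl (fun b a : α => W a < W b) := ⟨fun _ => lt_irrefl _⟩
  exact Subrelation.wf (fun h => hW h.1 h.2) (Finite.wellFounded_of_trans_of_irrefl _)

@[simp]
lemma coalitionValue_empty (φ : Finset ι → ι → ℝ) : coalitionValue φ ∅ = 0 := by
  simp [coalitionValue]

section Welfare

variable [DecidableEq ι] (φ : Finset ι → ι → ℝ)

lemma welfare_erase_empty (P : Finset (Finset ι)) : welfare φ (P.erase ∅) = welfare φ P :=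
  sum_erase _ (coalitionValue_empty φ)

lemma welfare_union_of_subset_insert_empty {P A : Finset (Finset ι)} (hA : A ⊆ insert ∅ P) :
    welfare φ (P ∪ A) = welfare φ P := by
  refine (sum_subset subset_union_left fun S hS hSP => ?_).symm
  obtain rfl : S = ∅ := by
    simpa [hSP] using hA ((mem_union.mp hS).resolve_left hSP)
  exact coalitionValue_empty φ

lemma welfare_union_pair {Q : Finset (Finset ι)} {A B : Finset ι} (hA : A ∉ Q) (hB : B ∉ Q)
    (hAB : A ≠ B) :
    welfare φ (Q ∪ {A, B}) = welfare φ Q + coalitionValue φ A + coalitionValue φ B := by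
  rw [welfare, sum_union (by simp [hA, hB]), sum_pair hAB, welfare, add_assoc]

end Welfare

section Coalitions

variable [DecidableEq ι]

lemma biUnion_erase_empty (P : Finset (Finset ι)) : (P.erase ∅).biUnion id = P.biUnion id := by
  ext x
  simp only [mem_biUnion, mem_erase, id]
  exact ⟨fun ⟨S, ⟨_, hS⟩, hx⟩ => ⟨S, hS, hx⟩, fun ⟨S, hS, hx⟩ => ⟨S, ⟨ne_empty_of_mem hx, hS⟩, hx⟩⟩

lemma biUnion_union_pair (Q : Finset (Finset ι)) (A B : Finset ι) :
    (Q ∪ {A, B}).biUnion id = Q.biUnion id ∪ (A ∪ B) := by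
  rw [union_biUnion, biUnion_insert, singleton_biUnion, id, id]

lemma erase_union_insert_of_mem {Sm Sk : Finset ι} {i : ι} (hi : i ∈ Sm) :
    Sm.erase i ∪ insert i Sk = Sm ∪ Sk := by
  rw [erase_union_of_mem (mem_insert_self i Sk), union_insert,
    insert_eq_of_mem (mem_union_left Sk hi)]

end Coalitions

namespace IsPartition

variable [DecidableEq ι] [Fintype ι] {P : Finset (Finset ι)} {Sm Sk : Finset ι}

lemma empty_notMem (hP : IsPartition P) : ∅ ∉ P :=
  fun h => not_nonempty_empty (hP.1 ∅ h)

/-- Adjoining `∅` lets the target coalition `Sk ∈ P ∪ {∅}` of a join be treated like a member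
of `P`. -/
lemma pairwiseDisjoint_insert_empty (hP : IsPartition P) :
    (↑(insert ∅ P) : Set (Finset ι)).PairwiseDisjoint id := by
  rw [coe_insert]
  exact Set.PairwiseDisjoint.insert (fun S hS T hT => hP.2.1 S hS T hT)
    fun T _ _ => disjoint_empty_left T

lemma disjoint_union_of_mem_sdiff (hP : IsPartition P) (hSm : Sm ∈ insert ∅ P)
    (hSk : Sk ∈ insert ∅ P) {T : Finset ι} (hT : T ∈ P \ {Sm, Sk}) : Disjoint T (Sm ∪ Sk) := by
  simp only [mem_sdiff, mem_insert, mem_singleton, not_or] at hT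
  obtain ⟨hTP, hTm, hTk⟩ := hT
  have hT : T ∈ insert ∅ P := mem_insert_of_mem hTP
  exact disjoint_union_right.mpr
    ⟨hP.pairwiseDisjoint_insert_empty hT hSm hTm, hP.pairwiseDisjoint_insert_empty hT hSk hTk⟩

lemma notMem_sdiff_of_subset_union (hP : IsPartition P) (hSm : Sm ∈ insert ∅ P)
    (hSk : Sk ∈ insert ∅ P) {X : Finset ι} (hX : X ⊆ Sm ∪ Sk) : X ∉ P \ {Sm, Sk} := by
  intro hXQ
  have hX_empty : X = ∅ :=
    disjoint_self.mp ((hP.disjoint_union_of_mem_sdiff hSm hSk hXQ).mono_right hX)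
  exact hP.empty_notMem (hX_empty ▸ (mem_sdiff.mp hXQ).1)

variable {φ : Finset ι → ι → ℝ} {P' : Finset (Finset ι)}

lemma welfare_lt_of_joinStep (hP : IsPartition P) (h : JoinStep φ P P') :
    welfare φ P < welfare φ P' := by
  obtain ⟨i, Sm, Sk, hSm, hi, hSk, hkm, hgain, rfl⟩ := h
  have hSm' : Sm ∈ insert ∅ P := mem_insert_of_mem hSm
  have hSk' : Sk ∈ insert ∅ P := mem_insert.mpr hSk.symm
  have he : Sm.erase i ⊆ Sm ∪ Sk := erase_union_insert_of_mem hi ▸ subset_union_left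
  have hj : insert i Sk ⊆ Sm ∪ Sk := erase_union_insert_of_mem hi ▸ subset_union_right
  have hej : Sm.erase i ≠ insert i Sk :=
    fun h => notMem_erase i Sm (h ▸ mem_insert_self i Sk)
  have hwP : welfare φ P =
      welfare φ (P \ {Sm, Sk}) + coalitionValue φ Sm + coalitionValue φ Sk := by
    rw [← welfare_union_of_subset_insert_empty φ
        (insert_subset hSm' (singleton_subset_iff.mpr hSk')),
      ← sdiff_union_self_eq_union, welfare_union_pair φ (by simp) (by simp) hkm.symm]
  have hwP' : welfare φ (((P \ {Sm, Sk}) ∪ {Sm.erase i, insert i Sk}).erase ∅) =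
      welfare φ (P \ {Sm, Sk}) + coalitionValue φ (Sm.erase i) +
        coalitionValue φ (insert i Sk) := by
    rw [welfare_erase_empty, welfare_union_pair φ (hP.notMem_sdiff_of_subset_union hSm' hSk' he)
      (hP.notMem_sdiff_of_subset_union hSm' hSk' hj) hej]
  linarith

lemma joinStep (hP : IsPartition P) (h : JoinStep φ P P') : IsPartition P' := by
  obtain ⟨i, Sm, Sk, hSm, hi, hSk, hkm, -, rfl⟩ := h
  have hSm' : Sm ∈ insert ∅ P := mem_insert_of_mem hSm
  have hSk' : Sk ∈ insert ∅ P := mem_insert.mpr hSk.symm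
  have he : Sm.erase i ⊆ Sm ∪ Sk := erase_union_insert_of_mem hi ▸ subset_union_left
  have hj : insert i Sk ⊆ Sm ∪ Sk := erase_union_insert_of_mem hi ▸ subset_union_right
  have hdisj_Q {X : Finset ι} (hX : X ⊆ Sm ∪ Sk) (T : Finset ι) (hT : T ∈ P \ {Sm, Sk}) :
      Disjoint X T :=
    ((hP.disjoint_union_of_mem_sdiff hSm' hSk' hT).mono_right hX).symm
  have hdisj_ej : Disjoint (Sm.erase i) (insert i Sk) :=
    disjoint_insert_right.mpr ⟨notMem_erase i Sm,
      (hP.pairwiseDisjoint_insert_empty hSm' hSk' hkm.symm).mono_left (erase_subset i Sm)⟩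
  refine ⟨fun S hS => nonempty_iff_ne_empty.mpr (ne_of_mem_erase hS), ?_, ?_⟩
  · have hQ : (↑(P \ {Sm, Sk}) : Set (Finset ι)).PairwiseDisjoint id :=
      hP.pairwiseDisjoint_insert_empty.subset
        (coe_subset.mpr (sdiff_subset.trans (subset_insert _ _)))
    have hQej : Set.PairwiseDisjoint
        (↑((P \ {Sm, Sk}) ∪ {Sm.erase i, insert i Sk}) : Set (Finset ι)) id := by
      rw [union_comm, insert_union, singleton_union, coe_insert, coe_insert]
      refine (hQ.insert fun T hT _ => hdisj_Q hj T hT).insert ?_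
      rintro T (rfl | hT) -
      · exact hdisj_ej
      · exact hdisj_Q he T hT
    exact fun S hS T hT => hQej (mem_of_mem_erase hS) (mem_of_mem_erase hT)
  · calc _ = (P \ {Sm, Sk}).biUnion id ∪ (Sm.erase i ∪ insert i Sk) := by
          rw [biUnion_erase_empty, biUnion_union_pair]
      _ = (P ∪ {Sm, Sk}).biUnion id := by
          rw [erase_union_insert_of_mem hi, ← biUnion_union_pair, sdiff_union_self_eq_union]
      _ = univ := by rw [union_biUnion, hP.2.2, union_eq_left.mpr (subset_univ _)]

end IsPartition

/-- Theorem 1 + Proposition 2: from any initial partition there is a finite sequence of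
admissible join operations ending in a Nash-stable partition (no admissible join possible). -/
theorem converges_to_nash_stable [DecidableEq ι] [Fintype ι]
    (φ : Finset ι → ι → ℝ) (Pinit : Finset (Finset ι)) (hPinit : IsPartition Pinit) :
    ∃ (T : ℕ) (f : ℕ → Finset (Finset ι)),
      f 0 = Pinit ∧
      (∀ l < T, JoinStep φ (f l) (f (l + 1))) ∧
      (∀ P', ¬ JoinStep φ (f T) P') :=
  exists_chain_to_terminal (wellFounded_of_increasing_potential (welfare φ)
    fun _ _ hP h => hP.welfare_lt_of_joinStep h) (fun _ _ hP h => hP.joinStep h) hPinit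
end
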